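/- Let λ, μ, α, β be nonzero complex numbers with α ≠ β, and suppose S_n = λα^n + μβ^n is a rational integer for every n ≥ n_0. Then α and β are algebraic integers of degree at most 2 over ℚ; more precisely, they are rational integers or conjugate quadratic algebraic integers, and λ ∈ ℚ(α), μ ∈ ℚ(β). -/

import Mathlib

/-!
Write `s n = L α ^ n + M β ^ n` for the integer `S (n₀ + n)`, with `L = λ α ^ n₀`, `M = μ β ^ n₀`.
The Hankel determinants `s n s (n+2) - s (n+1) ^ 2 = L M (α - β) ^ 2 (α β) ^ n` and
`s 0 s 3 - s 1 s 2 = L M (α - β) ^ 2 (α + β)` are integers, the first one nonzero, so `α + β` and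
`α β` are rational; hence `α`, `β` are the roots of a rational quadratic, and `λ ∈ ℚ(α)` because
`L (α - β) = s 1 - β s 0`. Since `L (α - β) α ^ n = s (n+1) - β s n`, all powers of `α` lie in the
finitely generated `ℤ`-module `(L (α - β))⁻¹ (ℤ + ℤ β)`, so `α` is an algebraic integer; as `ℤ` is
integrally closed, a rational `α` is then a rational integer.
-/

open Polynomial IntermediateField

theorem isIntegral_of_forall_pow_mem {R A : Type*} [CommRing R] [IsNoetherianRing R]
    [CommRing A] [Algebra R A] {N : Submodule R A} (hN : N.FG) {x : A}
    (hx : ∀ n : ℕ, x ^ n ∈ N) : IsIntegral R x := by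
  refine .of_mem_of_fg (Algebra.adjoin R {x}) (hN.of_le ?_) x
    (Algebra.self_mem_adjoin_singleton R x)
  rw [Algebra.adjoin_eq_span, ← Submonoid.powers_eq_closure, Submodule.span_le]
  rintro _ ⟨n, rfl⟩
  exact hx n

theorem minpoly_eq_of_aeval_eq_zero {F K : Type*} [Field F] [Field K] [Algebra F K] {x : K}
    {f : F[X]} (hf : f.Monic) (hdeg : f.natDegree = 2) (hx : aeval x f = 0)
    (hirr : x ∉ (algebraMap F K).range) : minpoly F x = f := by
  have hint : IsIntegral F x := ⟨f, hf, hx⟩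
  refine (eq_of_monic_of_dvd_of_natDegree_le (minpoly.monic hint) hf (minpoly.dvd F x hx) ?_).symm
  rw [hdeg]
  exact (minpoly.two_le_natDegree_iff hint).mpr hirr

variable {K : Type*} [Field K]

theorem exists_intCast_eq_of_isIntegral [CharZero K] {x : K} (hx : IsIntegral ℤ x)
    (hrat : x ∈ (algebraMap ℚ K).range) : ∃ a : ℤ, x = a := by
  obtain ⟨r, rfl⟩ := hrat
  obtain ⟨a, rfl⟩ := IsIntegrallyClosed.isIntegral_iff.mp
    ((isIntegral_algebraMap_iff (algebraMap ℚ K).injective).mp hx)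
  exact ⟨a, by simp⟩

theorem intCast_or_minpoly_eq_of_add_mul_rat [CharZero K] {α β : K} (hα : IsIntegral ℤ α)
    (hβ : IsIntegral ℤ β) {p q : ℚ} (hp : α + β = p) (hq : α * β = q) :
    ((∃ a : ℤ, α = a) ∧ (∃ b : ℤ, β = b)) ∨
      ((minpoly ℚ α).natDegree = 2 ∧ minpoly ℚ α = minpoly ℚ β) := by
  have hβα : β = algebraMap ℚ K p - α := by rw [eq_ratCast]; linear_combination hp
  by_cases hrat : α ∈ (algebraMap ℚ K).range
  · obtain ⟨r, hr⟩ := hrat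
    have hβrat : β ∈ (algebraMap ℚ K).range := ⟨p - r, by rw [map_sub, hr, hβα]⟩
    exact .inl ⟨exists_intCast_eq_of_isIntegral hα ⟨r, hr⟩,
      exists_intCast_eq_of_isIntegral hβ hβrat⟩
  · have hβrat : β ∉ (algebraMap ℚ K).range := by
      rintro ⟨r, hr⟩
      exact hrat ⟨p - r, by rw [map_sub, hr, hβα, sub_sub_cancel]⟩
    have hf : (X ^ 2 - C p * X + C q).Monic := by monicity!
    have hdeg : (X ^ 2 - C p * X + C q).natDegree = 2 := by compute_degree!
    set f : ℚ[X] := X ^ 2 - C p * X + C q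
    have hroots : ∀ x : K, aeval x f = (x - α) * (x - β) := by
      intro x
      simp only [f, map_add, map_sub, map_mul, map_pow, aeval_X, aeval_C, eq_ratCast]
      linear_combination x * hp - hq
    rw [minpoly_eq_of_aeval_eq_zero hf hdeg (by simp [hroots]) hrat,
      minpoly_eq_of_aeval_eq_zero hf hdeg (by simp [hroots]) hβrat]
    exact .inr ⟨hdeg, rfl⟩

section BinaryRecurrence

variable {L M α β : K} {s : ℕ → ℤ}

theorem binaryRecurrence_hankel_eq (hs : ∀ n, (s n : K) = L * α ^ n + M * β ^ n) (n : ℕ) :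
    ((s n * s (n + 2) - s (n + 1) ^ 2 : ℤ) : K) = L * M * (α - β) ^ 2 * (α * β) ^ n := by
  push_cast [hs]
  ring

theorem binaryRecurrence_cross_eq (hs : ∀ n, (s n : K) = L * α ^ n + M * β ^ n) :
    ((s 0 * s 3 - s 1 * s 2 : ℤ) : K) = L * M * (α - β) ^ 2 * (α + β) := by
  push_cast [hs]
  ring

theorem binaryRecurrence_mul_pow_eq (hs : ∀ n, (s n : K) = L * α ^ n + M * β ^ n) (n : ℕ) :
    L * (α - β) * α ^ n = s (n + 1) - β * s n := by
  rw [hs, hs]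
  ring

theorem isIntegral_of_binaryRecurrence (hs : ∀ n, (s n : K) = L * α ^ n + M * β ^ n)
    (hL : L ≠ 0) (hαβ : α ≠ β) : IsIntegral ℤ α := by
  set c := L * (α - β)
  have hc : c ≠ 0 := mul_ne_zero hL (sub_ne_zero.mpr hαβ)
  refine isIntegral_of_forall_pow_mem (N := Submodule.span ℤ {c⁻¹, c⁻¹ * β})
    (Submodule.fg_span (Set.toFinite _))
    fun n ↦ Submodule.mem_span_pair.mpr ⟨s (n + 1), -s n, ?_⟩
  rw [zsmul_eq_mul, zsmul_eq_mul, eq_comm, ← mul_right_inj' hc]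
  field_simp
  push_cast
  linear_combination binaryRecurrence_mul_pow_eq hs n

theorem exists_rat_add_eq_and_mul_eq_of_binaryRecurrence [CharZero K]
    (hs : ∀ n, (s n : K) = L * α ^ n + M * β ^ n) (hL : L ≠ 0) (hM : M ≠ 0) (hαβ : α ≠ β) :
    (∃ p : ℚ, α + β = p) ∧ ∃ q : ℚ, α * β = q := by
  have hH : ((s 0 * s 2 - s 1 ^ 2 : ℤ) : K) = L * M * (α - β) ^ 2 := by
    rw [binaryRecurrence_hankel_eq hs 0, pow_zero, mul_one]
  set H : ℤ := s 0 * s 2 - s 1 ^ 2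
  have hH0 : (H : K) ≠ 0 := by
    rw [hH]
    exact mul_ne_zero (mul_ne_zero hL hM) (pow_ne_zero 2 (sub_ne_zero.mpr hαβ))
  refine ⟨⟨(s 0 * s 3 - s 1 * s 2 : ℤ) / H, ?_⟩, ⟨(s 1 * s 3 - s 2 ^ 2 : ℤ) / H, ?_⟩⟩
  · rw [Rat.cast_div, Rat.cast_intCast, Rat.cast_intCast, eq_div_iff hH0,
      binaryRecurrence_cross_eq hs, hH]
    ring
  · rw [Rat.cast_div, Rat.cast_intCast, Rat.cast_intCast, eq_div_iff hH0,
      binaryRecurrence_hankel_eq hs 1, hH]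
    ring

theorem mem_adjoin_of_binaryRecurrence [CharZero K]
    (hs : ∀ n, (s n : K) = L * α ^ n + M * β ^ n) (hαβ : α ≠ β) {p : ℚ} (hp : α + β = p) :
    L ∈ ℚ⟮α⟯ := by
  have hαK : α ∈ ℚ⟮α⟯ := mem_adjoin_simple_self ℚ α
  have hβK : β ∈ ℚ⟮α⟯ := by
    rw [show β = p - α by linear_combination hp]
    exact sub_mem (SubfieldClass.ratCast_mem _ p) hαK
  have hL : L = (s 1 - β * s 0) / (α - β) := by
    rw [eq_div_iff (sub_ne_zero.mpr hαβ), ← binaryRecurrence_mul_pow_eq hs 0]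
    ring
  rw [hL]
  exact div_mem (sub_mem (intCast_mem _ _) (mul_mem hβK (intCast_mem _ _))) (sub_mem hαK hβK)

end BinaryRecurrence

theorem quadratic_of_integer_combination
    (lam mu α β : ℂ) (hlam : lam ≠ 0) (hmu : mu ≠ 0) (hα : α ≠ 0) (hβ : β ≠ 0)
    (hαβ : α ≠ β) (n₀ : ℕ)
    (h : ∀ n : ℕ, n₀ ≤ n → ∃ z : ℤ, lam * α ^ n + mu * β ^ n = z) :
    IsIntegral ℤ α ∧ IsIntegral ℤ β ∧
    (((∃ a : ℤ, α = a) ∧ (∃ b : ℤ, β = b)) ∨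
      ((minpoly ℚ α).natDegree = 2 ∧ minpoly ℚ α = minpoly ℚ β)) ∧
    lam ∈ (IntermediateField.adjoin ℚ {α} : IntermediateField ℚ ℂ) ∧
    mu ∈ (IntermediateField.adjoin ℚ {β} : IntermediateField ℚ ℂ) := by
  choose s hs using fun n ↦ h (n₀ + n) (Nat.le_add_right n₀ n)
  have hseq : ∀ n, (s n : ℂ) = lam * α ^ n₀ * α ^ n + mu * β ^ n₀ * β ^ n := by
    intro n
    rw [← hs, pow_add, pow_add]
    ring
  have hseq' : ∀ n, (s n : ℂ) = mu * β ^ n₀ * β ^ n + lam * α ^ n₀ * α ^ n :=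
    fun n ↦ (hseq n).trans (add_comm _ _)
  have hL : lam * α ^ n₀ ≠ 0 := mul_ne_zero hlam (pow_ne_zero n₀ hα)
  have hM : mu * β ^ n₀ ≠ 0 := mul_ne_zero hmu (pow_ne_zero n₀ hβ)
  obtain ⟨⟨p, hp⟩, ⟨q, hq⟩⟩ := exists_rat_add_eq_and_mul_eq_of_binaryRecurrence hseq hL hM hαβ
  have hintα := isIntegral_of_binaryRecurrence hseq hL hαβ
  have hintβ := isIntegral_of_binaryRecurrence hseq' hM hαβ.symm
  refine ⟨hintα, hintβ, intCast_or_minpoly_eq_of_add_mul_rat hintα hintβ hp hq, ?_, ?_⟩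
  · rw [← mul_div_cancel_right₀ lam (pow_ne_zero n₀ hα)]
    exact div_mem (mem_adjoin_of_binaryRecurrence hseq hαβ hp)
      (pow_mem (mem_adjoin_simple_self ℚ α) n₀)
  · rw [← mul_div_cancel_right₀ mu (pow_ne_zero n₀ hβ)]
    exact div_mem (mem_adjoin_of_binaryRecurrence hseq' hαβ.symm ((add_comm β α).trans hp))
      (pow_mem (mem_adjoin_simple_self ℚ β) n₀)
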